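/- Let 2 < t < 4, let z_1 ≥ 0 and z_2 be a real number, and let a ≥ 0, b ≥ 0 with a^t ≤ b. If X is a symmetric random variable with EX^2 ≤ a^2 and E|X|^t ≤ b, and U is a Rademacher random variable, then E|z_1 X + z_2|^t − b z_1^t ≤ E|a z_1 U + z_2|^t − a^t z_1^t. -/

import Mathlib

/-!
Write `Δ_f(z, x) = f (x + z) + f (x - z) - 2 f x`. Symmetrizing `X`,
`E|z₁X + z₂|^t = (E|z₁X + z₂|^t + E|z₁X - z₂|^t) / 2 = E[Φ((z₁X)²)] / 2 + z₁^t E|X|^t`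
with `Φ(s) = Δ_{|·|^t}(z₂, √s)`, while the Rademacher side is exactly
`Φ((a z₁)²) / 2 + a^t z₁^t`. So it suffices that `Φ` is nondecreasing and concave on `[0, ∞)`:
Jensen's inequality and `E(z₁X)² ≤ (a z₁)²` bound `E[Φ((z₁X)²)]` by `Φ((a z₁)²)`, and
`E|X|^t ≤ b` handles the remaining term.

With `q = t - 2 ∈ (0, 2)` and the odd power `ψ(y) = |y|^q y`, we have
`Φ'(s) = (t/2) Δ_ψ(z, x) / x` for `x = √s`, so concavity amounts to `x ↦ Δ_ψ(z, x) / x` being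
nonincreasing, i.e. to `(q + 1) x Δ_{|·|^q}(z, x) ≤ Δ_ψ(z, x)`. Both sides vanish when `x = 0` or
`z = 0`; differentiating in `x` (for `x ≤ z`) or in `z` (for `z ≤ x`) reduces it to subadditivity
of `y ↦ y^(q-1)` and to a trapezoid estimate for `y ↦ y^q`.
-/

open MeasureTheory Set Real

lemma hasDerivAt_abs_rpow_of_ne_zero (s : ℝ) {y : ℝ} (hy : y ≠ 0) :
    HasDerivAt (fun y : ℝ ↦ |y| ^ s) (s * |y| ^ (s - 2) * y) y := by
  have hy' : |y| ≠ 0 := abs_ne_zero.2 hy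
  convert (hasDerivAt_abs hy).rpow_const (p := s) (Or.inl hy') using 1
  rw [show s - 1 = s - 2 + 1 by ring, rpow_add_one hy']
  linear_combination (-(s * |y| ^ (s - 2))) * abs_mul_sign y

lemma abs_rpow_sub_two_mul_self_mul_self {s y : ℝ} (hy : y ≠ 0) :
    |y| ^ (s - 2) * y * y = |y| ^ s := by
  rw [mul_assoc, ← abs_mul_abs_self, ← mul_assoc, ← rpow_add_one (abs_ne_zero.2 hy),
    ← rpow_add_one (abs_ne_zero.2 hy)]
  ring_nf

lemma hasDerivAt_abs_rpow_mul_self_of_ne_zero (s : ℝ) {y : ℝ} (hy : y ≠ 0) :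
    HasDerivAt (fun y : ℝ ↦ |y| ^ s * y) ((s + 1) * |y| ^ s) y := by
  refine ((hasDerivAt_abs_rpow_of_ne_zero s hy).mul (hasDerivAt_id' y)).congr_deriv ?_
  rw [mul_one, mul_assoc s, mul_assoc s, abs_rpow_sub_two_mul_self_mul_self hy]
  ring

lemma continuous_abs_rpow_mul_self {s : ℝ} (hs : 0 ≤ s) : Continuous fun y : ℝ ↦ |y| ^ s * y :=
  (continuous_abs.rpow_const fun _ ↦ Or.inr hs).mul continuous_id

lemma hasDerivAt_abs_rpow_mul_self {s : ℝ} (hs : 0 < s) (y : ℝ) :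
    HasDerivAt (fun y : ℝ ↦ |y| ^ s * y) ((s + 1) * |y| ^ s) y :=
  hasDerivAt_of_hasDerivAt_of_ne' (fun _ hy ↦ hasDerivAt_abs_rpow_mul_self_of_ne_zero s hy)
    (continuous_abs_rpow_mul_self hs.le).continuousAt
    (continuous_const.mul (continuous_abs.rpow_const fun _ ↦ Or.inr hs.le)).continuousAt y

def secondDiff (f : ℝ → ℝ) (z x : ℝ) : ℝ := f (x + z) + f (x - z) - 2 * f x

section secondDiff

variable {f f' : ℝ → ℝ} {z x : ℝ}

@[simp] lemma secondDiff_zero_left (f : ℝ → ℝ) (x : ℝ) : secondDiff f 0 x = 0 := by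
  simp only [secondDiff, add_zero, sub_zero]; ring

lemma secondDiff_neg_left (f : ℝ → ℝ) (z x : ℝ) : secondDiff f (-z) x = secondDiff f z x := by
  simp only [secondDiff, sub_neg_eq_add, ← sub_eq_add_neg]; ring

lemma secondDiff_zero_right_of_odd (hf : ∀ y, f (-y) = -f y) (z : ℝ) : secondDiff f z 0 = 0 := by
  have h0 : f 0 = 0 := by linarith [neg_zero (G := ℝ) ▸ hf 0]
  simp only [secondDiff, zero_add, zero_sub, hf, h0]; ring

lemma secondDiff_neg_right_of_even (hf : ∀ y, f (-y) = f y) (z x : ℝ) :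
    secondDiff f z (-x) = secondDiff f z x := by
  simp only [secondDiff, show -x + z = -(x - z) by ring, show -x - z = -(x + z) by ring, hf]; ring

lemma hasDerivAt_secondDiff (hadd : HasDerivAt f (f' (x + z)) (x + z))
    (hsub : HasDerivAt f (f' (x - z)) (x - z)) (h : HasDerivAt f (f' x) x) :
    HasDerivAt (secondDiff f z) (secondDiff f' z x) x :=
  ((hadd.comp_add_const x z).fun_add (hsub.comp_sub_const x z)).fun_sub (h.const_mul 2)

lemma hasDerivAt_secondDiff_left (hadd : HasDerivAt f (f' (x + z)) (x + z))
    (hsub : HasDerivAt f (f' (x - z)) (x - z)) :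
    HasDerivAt (fun w ↦ secondDiff f w x) (f' (x + z) - f' (x - z)) z :=
  (((hadd.comp_const_add x z).fun_add (hsub.comp_const_sub x z)).sub_const
    (2 * f x)).congr_deriv (by ring)

end secondDiff

lemma abs_rpow_mul_self_of_pos (s : ℝ) {y : ℝ} (hy : 0 < y) : |y| ^ s * y = y ^ (s + 1) := by
  rw [abs_of_pos hy, rpow_add_one hy.ne']

lemma abs_rpow_mul_self_of_neg (s : ℝ) {y : ℝ} (hy : y < 0) : |y| ^ s * y = -(-y) ^ (s + 1) := by
  rw [abs_of_neg hy, rpow_add_one (neg_ne_zero.2 hy.ne)]; ring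

lemma add_rpow_le_two_mul_rpow_add_sub_rpow {r x z : ℝ} (hr : r < 1) (hx : 0 < x)
    (hxz : x < z) : (x + z) ^ r ≤ 2 * x ^ r + (z - x) ^ r := by
  rcases le_or_gt r 0 with hr0 | hr0
  · have h1 : (x + z) ^ r ≤ x ^ r := rpow_le_rpow_of_nonpos hx (by linarith) hr0
    have h2 : 0 ≤ x ^ r := rpow_nonneg hx.le r
    have h3 : 0 ≤ (z - x) ^ r := rpow_nonneg (by linarith) r
    linarith
  · have h1 : (x + z) ^ r ≤ x ^ r + z ^ r := rpow_add_le_add_rpow hx.le (by linarith) hr0.le hr.le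
    have h2 : z ^ r ≤ x ^ r + (z - x) ^ r := by
      simpa using rpow_add_le_add_rpow hx.le (sub_nonneg.2 hxz.le) hr0.le hr.le
    linarith

lemma mul_mul_sub_rpow_le_sub_rpow {q x w : ℝ} (hq0 : 0 < q) (hq2 : q < 2) (hw : 0 ≤ w)
    (hwx : w < x) :
    q * x * ((x + w) ^ (q - 1) - (x - w) ^ (q - 1)) ≤ (x + w) ^ q - (x - w) ^ q := by
  set u := x + w
  set v := x - w
  have hv : 0 < v := by linarith
  have hu : 0 < u := by linarith
  have hvu : v ≤ u := by linarith
  have hpow : v ^ q ≤ u ^ q := rpow_le_rpow hv.le hvu hq0.le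
  have hcross : v * u ^ (q - 1) ≤ u * v ^ (q - 1) := by
    have h := rpow_le_rpow_of_nonpos hv hvu (by linarith : q - 2 ≤ 0)
    rw [show q - 1 = q - 2 + 1 by ring, rpow_add_one hu.ne', rpow_add_one hv.ne']
    nlinarith [mul_pos hu hv]
  have hu' : u * u ^ (q - 1) = u ^ q := by
    rw [← rpow_one_add' hu.le (by linarith)]; ring_nf
  have hv' : v * v ^ (q - 1) = v ^ q := by
    rw [← rpow_one_add' hv.le (by linarith)]; ring_nf
  calc q * x * (u ^ (q - 1) - v ^ (q - 1))
      = q / 2 * ((u ^ q - v ^ q) + (v * u ^ (q - 1) - u * v ^ (q - 1))) := by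
        rw [← hu', ← hv']; ring
    _ ≤ q / 2 * (u ^ q - v ^ q) := by gcongr; linarith
    _ ≤ u ^ q - v ^ q := mul_le_of_le_one_left (sub_nonneg.2 hpow) (by linarith)

section oddPower

variable {q : ℝ}

lemma secondDiff_abs_rpow_mul_self_nonpos (hq : q < 2) {x z : ℝ} (hx : 0 < x) (hxz : x < z) :
    secondDiff (fun y ↦ |y| ^ (q - 2) * y) z x ≤ 0 := by
  have h := add_rpow_le_two_mul_rpow_add_sub_rpow (r := q - 1) (by linarith) hx hxz
  simp only [secondDiff, abs_rpow_mul_self_of_pos _ (by linarith : 0 < x + z),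
    abs_rpow_mul_self_of_neg _ (by linarith : x - z < 0), abs_rpow_mul_self_of_pos _ hx,
    show q - 2 + 1 = q - 1 by ring, neg_sub]
  linarith

lemma mul_secondDiff_abs_rpow_le_of_le (hq0 : 0 < q) (hq2 : q < 2) {x z : ℝ} (hx : 0 ≤ x)
    (hxz : x ≤ z) :
    (q + 1) * x * secondDiff (fun y ↦ |y| ^ q) z x ≤ secondDiff (fun y ↦ |y| ^ q * y) z x := by
  set g : ℝ → ℝ := fun y ↦
    secondDiff (fun y ↦ |y| ^ q * y) z y - (q + 1) * y * secondDiff (fun y ↦ |y| ^ q) z y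
  have hg : ∀ y ∈ Ioo 0 z, HasDerivAt g
      (-((q + 1) * q * y * secondDiff (fun y ↦ |y| ^ (q - 2) * y) z y)) y := by
    rintro y ⟨hy, hyz⟩
    have hodd := hasDerivAt_secondDiff (z := z) (f' := fun y ↦ (q + 1) * |y| ^ q)
      (hasDerivAt_abs_rpow_mul_self hq0 (y + z))
      (hasDerivAt_abs_rpow_mul_self hq0 (y - z)) (hasDerivAt_abs_rpow_mul_self hq0 y)
    have heven := hasDerivAt_secondDiff (z := z) (f' := fun y ↦ q * |y| ^ (q - 2) * y)
      (hasDerivAt_abs_rpow_of_ne_zero q (by linarith : y + z ≠ 0))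
      (hasDerivAt_abs_rpow_of_ne_zero q (by linarith : y - z ≠ 0))
      (hasDerivAt_abs_rpow_of_ne_zero q hy.ne')
    refine (hodd.sub (((hasDerivAt_id' y).const_mul (q + 1)).mul heven)).congr_deriv ?_
    simp only [secondDiff]; ring
  have hcont : Continuous g := by
    simp only [g, secondDiff]
    fun_prop (disch := linarith)
  have hmono : MonotoneOn g (Icc 0 z) := by
    refine monotoneOn_of_deriv_nonneg (convex_Icc 0 z) hcont.continuousOn
      (fun y hy ↦ ?_) fun y hy ↦ ?_ <;> rw [interior_Icc] at hy
    · exact (hg y hy).differentiableAt.differentiableWithinAt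
    obtain ⟨hy0, hyz⟩ := hy
    rw [(hg y ⟨hy0, hyz⟩).deriv, neg_nonneg]
    exact mul_nonpos_of_nonneg_of_nonpos (by positivity)
      (secondDiff_abs_rpow_mul_self_nonpos hq2 hy0 hyz)
  have h0 : g 0 = 0 := by
    simp only [g, mul_zero, zero_mul, sub_zero]
    exact secondDiff_zero_right_of_odd (fun y ↦ by rw [abs_neg]; ring) z
  have := hmono ⟨le_rfl, hx.trans hxz⟩ ⟨hx, hxz⟩ hx
  simp only [h0, g] at this
  linarith

lemma mul_secondDiff_abs_rpow_le_of_ge (hq0 : 0 < q) (hq2 : q < 2) {x z : ℝ} (hz : 0 ≤ z)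
    (hzx : z ≤ x) :
    (q + 1) * x * secondDiff (fun y ↦ |y| ^ q) z x ≤ secondDiff (fun y ↦ |y| ^ q * y) z x := by
  set g : ℝ → ℝ := fun w ↦
    secondDiff (fun y ↦ |y| ^ q * y) w x - (q + 1) * x * secondDiff (fun y ↦ |y| ^ q) w x
  have hg : ∀ w ∈ Ioo 0 x, HasDerivAt g ((q + 1) * (((x + w) ^ q - (x - w) ^ q)
      - q * x * ((x + w) ^ (q - 1) - (x - w) ^ (q - 1)))) w := by
    rintro w ⟨hw, hwx⟩
    have hadd : 0 < x + w := by linarith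
    have hsub : 0 < x - w := by linarith
    have hodd := hasDerivAt_secondDiff_left (x := x) (f' := fun y ↦ (q + 1) * |y| ^ q)
      (hasDerivAt_abs_rpow_mul_self hq0 (x + w)) (hasDerivAt_abs_rpow_mul_self hq0 (x - w))
    have heven := hasDerivAt_secondDiff_left (x := x) (f' := fun y ↦ q * |y| ^ (q - 2) * y)
      (hasDerivAt_abs_rpow_of_ne_zero q hadd.ne') (hasDerivAt_abs_rpow_of_ne_zero q hsub.ne')
    refine (hodd.sub (heven.const_mul ((q + 1) * x))).congr_deriv ?_
    rw [mul_assoc q, mul_assoc q, abs_rpow_mul_self_of_pos _ hadd,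
      abs_rpow_mul_self_of_pos _ hsub, abs_of_pos hadd, abs_of_pos hsub,
      show q - 2 + 1 = q - 1 by ring]
    ring
  have hcont : Continuous g := by
    simp only [g, secondDiff]
    fun_prop (disch := linarith)
  have hmono : MonotoneOn g (Icc 0 x) := by
    refine monotoneOn_of_deriv_nonneg (convex_Icc 0 x) hcont.continuousOn
      (fun w hw ↦ ?_) fun w hw ↦ ?_ <;> rw [interior_Icc] at hw
    · exact (hg w hw).differentiableAt.differentiableWithinAt
    rw [(hg w hw).deriv]
    have := mul_mul_sub_rpow_le_sub_rpow hq0 hq2 hw.1.le hw.2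
    exact mul_nonneg (by linarith) (by linarith)
  have := hmono ⟨le_rfl, hz.trans hzx⟩ ⟨hz, hzx⟩ hz
  simp only [g, secondDiff_zero_left, mul_zero, sub_zero] at this
  linarith

lemma mul_secondDiff_abs_rpow_le (hq0 : 0 < q) (hq2 : q < 2) (z : ℝ) {x : ℝ} (hx : 0 ≤ x) :
    (q + 1) * x * secondDiff (fun y ↦ |y| ^ q) z x ≤ secondDiff (fun y ↦ |y| ^ q * y) z x := by
  wlog hz : 0 ≤ z generalizing z
  · simpa only [secondDiff_neg_left] using this (-z) (by linarith)
  rcases le_total x z with hxz | hzx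
  · exact mul_secondDiff_abs_rpow_le_of_le hq0 hq2 hx hxz
  · exact mul_secondDiff_abs_rpow_le_of_ge hq0 hq2 hz hzx

lemma antitoneOn_secondDiff_abs_rpow_mul_self_div (hq0 : 0 < q) (hq2 : q < 2) (z : ℝ) :
    AntitoneOn (fun x ↦ secondDiff (fun y ↦ |y| ^ q * y) z x / x) (Ioi 0) := by
  have hd : ∀ x ≠ 0, HasDerivAt (fun x ↦ secondDiff (fun y ↦ |y| ^ q * y) z x / x)
      (((q + 1) * x * secondDiff (fun y ↦ |y| ^ q) z x
        - secondDiff (fun y ↦ |y| ^ q * y) z x) / x ^ 2) x := by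
    intro x hx
    have h := hasDerivAt_secondDiff (z := z) (f' := fun y ↦ (q + 1) * |y| ^ q)
      (hasDerivAt_abs_rpow_mul_self hq0 (x + z)) (hasDerivAt_abs_rpow_mul_self hq0 (x - z))
      (hasDerivAt_abs_rpow_mul_self hq0 x)
    refine (h.div (hasDerivAt_id' x) hx).congr_deriv ?_
    simp only [secondDiff]; ring
  refine antitoneOn_of_deriv_nonpos (convex_Ioi 0)
    (fun x hx ↦ (hd x (ne_of_gt hx)).continuousAt.continuousWithinAt)
    (fun x hx ↦ ?_) fun x hx ↦ ?_ <;> rw [interior_Ioi] at hx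
  · exact (hd x (ne_of_gt hx)).differentiableAt.differentiableWithinAt
  rw [(hd x (ne_of_gt hx)).deriv]
  exact div_nonpos_of_nonpos_of_nonneg
    (sub_nonpos.2 (mul_secondDiff_abs_rpow_le hq0 hq2 z (le_of_lt hx))) (sq_nonneg x)

lemma secondDiff_abs_rpow_mul_self_nonneg (hq : 0 < q) (z : ℝ) {x : ℝ} (hx : 0 ≤ x) :
    0 ≤ secondDiff (fun y ↦ |y| ^ q * y) z x := by
  wlog hz : 0 ≤ z generalizing z
  · simpa only [secondDiff_neg_left] using this (-z) (by linarith)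
  have hd : ∀ w, HasDerivAt (fun w ↦ secondDiff (fun y ↦ |y| ^ q * y) w x)
      ((q + 1) * |x + w| ^ q - (q + 1) * |x - w| ^ q) w := fun w ↦
    hasDerivAt_secondDiff_left (f' := fun y ↦ (q + 1) * |y| ^ q)
      (hasDerivAt_abs_rpow_mul_self hq (x + w)) (hasDerivAt_abs_rpow_mul_self hq (x - w))
  have hmono : MonotoneOn (fun w ↦ secondDiff (fun y ↦ |y| ^ q * y) w x) (Ici 0) := by
    refine monotoneOn_of_deriv_nonneg (convex_Ici 0)
      (fun w _ ↦ (hd w).continuousAt.continuousWithinAt)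
      (fun w _ ↦ (hd w).differentiableAt.differentiableWithinAt) fun w hw ↦ ?_
    rw [interior_Ici, mem_Ioi] at hw
    have habs : |x - w| ≤ |x + w| := by
      rw [abs_of_nonneg (by linarith : 0 ≤ x + w)]
      exact abs_sub_le_iff.2 ⟨by linarith, by linarith⟩
    rw [(hd w).deriv, sub_nonneg]
    exact mul_le_mul_of_nonneg_left (rpow_le_rpow (abs_nonneg _) habs hq.le) (by linarith)
  simpa using hmono self_mem_Ici hz hz

end oddPower

section sqrt
variable {t : ℝ}

lemma continuous_secondDiff_abs_rpow (ht : 0 ≤ t) (z : ℝ) :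
    Continuous (secondDiff (fun y ↦ |y| ^ t) z) := by
  unfold secondDiff
  fun_prop (disch := exact ht)

lemma hasDerivAt_secondDiff_abs_rpow (ht : 1 < t) (z x : ℝ) :
    HasDerivAt (secondDiff (fun y ↦ |y| ^ t) z)
      (t * secondDiff (fun y ↦ |y| ^ (t - 2) * y) z x) x :=
  (hasDerivAt_secondDiff (f' := fun y ↦ t * |y| ^ (t - 2) * y) (hasDerivAt_abs_rpow _ ht)
    (hasDerivAt_abs_rpow _ ht) (hasDerivAt_abs_rpow _ ht)).congr_deriv
      (by simp only [secondDiff]; ring)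

lemma monotoneOn_secondDiff_abs_rpow_sqrt (ht : 2 < t) (z : ℝ) :
    MonotoneOn (fun s ↦ secondDiff (fun y ↦ |y| ^ t) z √s) (Ici 0) := by
  have hmono : MonotoneOn (secondDiff (fun y ↦ |y| ^ t) z) (Ici 0) := by
    have hd := hasDerivAt_secondDiff_abs_rpow (by linarith) z
    refine monotoneOn_of_deriv_nonneg (convex_Ici 0)
      (fun x _ ↦ (hd x).continuousAt.continuousWithinAt)
      (fun x _ ↦ (hd x).differentiableAt.differentiableWithinAt) fun x hx ↦ ?_
    rw [interior_Ici] at hx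
    rw [(hd x).deriv]
    exact mul_nonneg (by linarith)
      (secondDiff_abs_rpow_mul_self_nonneg (by linarith) z (le_of_lt hx))
  exact hmono.comp (sqrt_monotone.monotoneOn _) fun s _ ↦ sqrt_nonneg s

lemma concaveOn_secondDiff_abs_rpow_sqrt (ht2 : 2 < t) (ht4 : t < 4) (z : ℝ) :
    ConcaveOn ℝ (Ici 0) (fun s ↦ secondDiff (fun y ↦ |y| ^ t) z √s) := by
  have hd : ∀ s ∈ Ioi (0 : ℝ), HasDerivAt (fun s ↦ secondDiff (fun y ↦ |y| ^ t) z √s)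
      (t / 2 * (secondDiff (fun y ↦ |y| ^ (t - 2) * y) z √s / √s)) s := by
    intro s hs
    refine ((hasDerivAt_secondDiff_abs_rpow (by linarith) z √s).comp s
      (hasDerivAt_sqrt (ne_of_gt hs))).congr_deriv ?_
    field_simp
  have hanti := antitoneOn_secondDiff_abs_rpow_mul_self_div (q := t - 2) (by linarith)
    (by linarith) z
  refine AntitoneOn.concaveOn_of_deriv (convex_Ici 0)
    ((continuous_secondDiff_abs_rpow (by linarith) z).comp continuous_sqrt).continuousOn
    (fun s hs ↦ ?_) fun s hs r hr hsr ↦ ?_ <;>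
    rw [interior_Ici] at *
  · exact (hd s hs).differentiableAt.differentiableWithinAt
  rw [(hd s hs).deriv, (hd r hr).deriv]
  exact mul_le_mul_of_nonneg_left (hanti (sqrt_pos.2 hs) (sqrt_pos.2 hr) (sqrt_le_sqrt hsr))
    (by linarith)

end sqrt

lemma abs_add_rpow_add_abs_sub_rpow (t u v : ℝ) :
    |u + v| ^ t + |u - v| ^ t = secondDiff (fun y ↦ |y| ^ t) v √(u ^ 2) + 2 * |u| ^ t := by
  have heven : secondDiff (fun y ↦ |y| ^ t) v |u| = secondDiff (fun y ↦ |y| ^ t) v u := by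
    rcases abs_choice u with h | h <;> rw [h]
    exact secondDiff_neg_right_of_even (fun y ↦ by rw [abs_neg]) v u
  rw [sqrt_sq_eq_abs, heven, secondDiff]
  ring

section probability

variable {Ω : Type*} [MeasurableSpace Ω] {μ : Measure Ω}

lemma integral_comp_of_rademacher [IsProbabilityMeasure μ] {U : Ω → ℝ} (hU : Measurable U)
    (h₁ : μ {ω | U ω = 1} = 1 / 2) (h₂ : μ {ω | U ω = -1} = 1 / 2) (f : ℝ → ℝ) :
    ∫ ω, f (U ω) ∂μ = (f 1 + f (-1)) / 2 := by
  set A := {ω | U ω = 1}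
  set B := {ω | U ω = -1}
  have hA : MeasurableSet A := hU (measurableSet_singleton 1)
  have hB : MeasurableSet B := hU (measurableSet_singleton (-1))
  have hAB : Disjoint A B := disjoint_left.2 fun ω (hωA : U ω = 1) (hωB : U ω = -1) ↦ by
    linarith
  have hae : ∀ᵐ ω ∂μ, ω ∈ A ∪ B := by
    rw [ae_mem_iff_measure_eq (hA.union hB).nullMeasurableSet, measure_union hAB hB, h₁, h₂,
      measure_univ, ENNReal.add_halves]
  have heq : (fun ω ↦ f (U ω)) =ᵐ[μ]
      A.indicator (fun _ ↦ f 1) + B.indicator (fun _ ↦ f (-1)) := by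
    filter_upwards [hae] with ω hω
    rcases hω with hωA | hωB
    · rw [Pi.add_apply, indicator_of_mem hωA, indicator_of_notMem (disjoint_left.1 hAB hωA),
        add_zero, show U ω = 1 from hωA]
    · rw [Pi.add_apply, indicator_of_notMem (disjoint_right.1 hAB hωB), indicator_of_mem hωB,
        zero_add, show U ω = -1 from hωB]
  rw [integral_congr_ae heq, integral_add' ((integrable_const _).indicator hA)
    ((integrable_const _).indicator hB), integral_indicator_const _ hA,
    integral_indicator_const _ hB, measureReal_def, measureReal_def, h₁, h₂]
  norm_num
  ring

lemma integral_comp_neg_of_map_eq {E : Type*} [NormedAddCommGroup E] [NormedSpace ℝ E]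
    {X : Ω → ℝ} (hX : Measurable X) (hsymm : μ.map X = μ.map (fun ω ↦ -X ω)) {g : ℝ → E}
    (hg : AEStronglyMeasurable g (μ.map X)) :
    ∫ ω, g (-X ω) ∂μ = ∫ ω, g (X ω) ∂μ := by
  rw [← integral_map hX.aemeasurable hg, hsymm]
  exact (integral_map hX.neg.aemeasurable (hsymm ▸ hg)).symm

lemma integrable_abs_rpow_iff_memLp {X : Ω → ℝ} (hX : AEStronglyMeasurable X μ) {t : ℝ}
    (ht : 0 < t) : Integrable (fun ω ↦ |X ω| ^ t) μ ↔ MemLp X (ENNReal.ofReal t) μ := by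
  rw [← integrable_norm_rpow_iff hX (by simpa using ht) ENNReal.ofReal_ne_top,
    ENNReal.toReal_ofReal ht.le]
  rfl

theorem integral_abs_mul_add_rpow_le [IsProbabilityMeasure μ] {t : ℝ} (ht2 : 2 < t)
    (ht4 : t < 4)
    {X : Ω → ℝ} (hX : Measurable X) (hsymm : μ.map X = μ.map (fun ω ↦ -X ω))
    (hXt : Integrable (fun ω ↦ |X ω| ^ t) μ) {σ : ℝ} (hX2 : ∫ ω, X ω ^ 2 ∂μ ≤ σ ^ 2) (c d : ℝ) :
    ∫ ω, |c * X ω + d| ^ t ∂μ ≤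
      (|c * σ + d| ^ t + |c * σ - d| ^ t) / 2 - |c * σ| ^ t + |c| ^ t * ∫ ω, |X ω| ^ t ∂μ := by
  set Φ := fun s ↦ secondDiff (fun y ↦ |y| ^ t) d √s
  have hLp : MemLp X (ENNReal.ofReal t) μ :=
    (integrable_abs_rpow_iff_memLp hX.aestronglyMeasurable (by linarith)).1 hXt
  have hint : ∀ e, Integrable (fun ω ↦ |c * X ω + e| ^ t) μ := fun e ↦
    (integrable_abs_rpow_iff_memLp (by fun_prop) (by linarith)).2
      ((hLp.const_mul c).add (memLp_const e))
  have hsq : Integrable (fun ω ↦ (c * X ω) ^ 2) μ :=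
    ((hLp.const_mul c).mono_exponent (by norm_num [ENNReal.ofReal_ofNat, ht2.le] :
      (2 : ENNReal) ≤ ENNReal.ofReal t)).integrable_sq
  have hΦ : ∀ ω, Φ ((c * X ω) ^ 2) =
      |c * X ω + d| ^ t + |c * X ω + -d| ^ t - 2 * (|c| ^ t * |X ω| ^ t) := fun ω ↦ by
    rw [← sub_eq_add_neg, abs_add_rpow_add_abs_sub_rpow, abs_mul,
      mul_rpow (abs_nonneg _) (abs_nonneg _)]
    ring
  have hΦint : Integrable (fun ω ↦ Φ ((c * X ω) ^ 2)) μ := by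
    simp_rw [hΦ]
    exact ((hint d).add (hint (-d))).sub ((hXt.const_mul _).const_mul 2)
  have hsymm' : ∫ ω, |c * X ω + -d| ^ t ∂μ = ∫ ω, |c * X ω + d| ^ t ∂μ := by
    have h := integral_comp_neg_of_map_eq hX hsymm (g := fun x ↦ |c * x + d| ^ t)
      (by fun_prop (disch := linarith))
    simp_rw [show ∀ x, |c * -x + d| = |c * x + -d| from fun x ↦ by
      rw [← abs_neg]; ring_nf] at h
    exact h
  have hjensen : ∫ ω, Φ ((c * X ω) ^ 2) ∂μ ≤ Φ (∫ ω, (c * X ω) ^ 2 ∂μ) :=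
    (concaveOn_secondDiff_abs_rpow_sqrt ht2 ht4 d).le_map_integral
      ((continuous_secondDiff_abs_rpow (by linarith) d).comp continuous_sqrt).continuousOn
      isClosed_Ici (ae_of_all _ fun ω ↦ mem_Ici.2 (sq_nonneg _)) hsq hΦint
  have hmono : Φ (∫ ω, (c * X ω) ^ 2 ∂μ) ≤ Φ ((c * σ) ^ 2) := by
    refine monotoneOn_secondDiff_abs_rpow_sqrt ht2 d
      (mem_Ici.2 (integral_nonneg fun ω ↦ sq_nonneg _)) (mem_Ici.2 (sq_nonneg _)) ?_
    simp_rw [mul_pow, integral_const_mul]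
    exact mul_le_mul_of_nonneg_left hX2 (sq_nonneg c)
  have hsum : ∫ ω, Φ ((c * X ω) ^ 2) ∂μ =
      2 * ∫ ω, |c * X ω + d| ^ t ∂μ - 2 * (|c| ^ t * ∫ ω, |X ω| ^ t ∂μ) := by
    simp_rw [hΦ]
    rw [integral_sub ((hint d).fun_add (hint (-d))) ((hXt.const_mul _).const_mul 2),
      integral_add (hint d) (hint (-d)), hsymm', integral_const_mul, integral_const_mul]
    ring
  have := abs_add_rpow_add_abs_sub_rpow t (c * σ) d
  linarith

end probability

theorem moment_ineq_symm_rademacher_two_lt_t_lt_four_general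
    (t : ℝ) (ht2 : 2 < t) (ht4 : t < 4)
    (z₁ z₂ : ℝ) (hz₁ : 0 ≤ z₁)
    (a b : ℝ) (ha : 0 ≤ a)
    -- a symmetric random variable `X` with `E X^2 ≤ a^2` and `E|X|^t ≤ b`
    (Ω : Type) [MeasurableSpace Ω] (μ : Measure Ω) [IsProbabilityMeasure μ]
    (X : Ω → ℝ) (hXmeas : Measurable X)
    (hXsymm : μ.map X = μ.map (fun ω => -X ω))
    (hXint : Integrable (fun ω => |X ω| ^ t) μ)
    (hX2 : ∫ ω, (X ω) ^ 2 ∂μ ≤ a ^ 2)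
    (hXt : ∫ ω, |X ω| ^ t ∂μ ≤ b)
    -- a Rademacher random variable `U`
    (Ω' : Type) [MeasurableSpace Ω'] (μ' : Measure Ω') [IsProbabilityMeasure μ']
    (U : Ω' → ℝ) (hUmeas : Measurable U)
    (hU1 : μ' {ω | U ω = 1} = 1 / 2) (hU2 : μ' {ω | U ω = -1} = 1 / 2) :
    (∫ ω, |z₁ * X ω + z₂| ^ t ∂μ) - b * z₁ ^ t
      ≤ (∫ ω, |a * z₁ * U ω + z₂| ^ t ∂μ') - a ^ t * z₁ ^ t := by
  have hX := integral_abs_mul_add_rpow_le ht2 ht4 hXmeas hXsymm hXint hX2 z₁ z₂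
  have hU := integral_comp_of_rademacher hUmeas hU1 hU2 fun u ↦ |a * z₁ * u + z₂| ^ t
  have hXb : z₁ ^ t * ∫ ω, |X ω| ^ t ∂μ ≤ z₁ ^ t * b :=
    mul_le_mul_of_nonneg_left hXt (rpow_nonneg hz₁ t)
  rw [abs_of_nonneg hz₁, abs_of_nonneg (mul_nonneg hz₁ ha), mul_rpow hz₁ ha] at hX
  rw [hU, show a * z₁ * 1 + z₂ = z₁ * a + z₂ by ring,
    show a * z₁ * -1 + z₂ = -(z₁ * a - z₂) by ring, abs_neg]
  linarith

theorem moment_ineq_symm_rademacher_two_lt_t_lt_four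
    (t : ℝ) (ht2 : 2 < t) (ht4 : t < 4)
    (z₁ z₂ : ℝ) (hz₁ : 0 ≤ z₁)
    (a b : ℝ) (ha : 0 ≤ a) (hb : 0 ≤ b) (hab : a ^ t ≤ b)
    -- a symmetric random variable `X` with `E X^2 ≤ a^2` and `E|X|^t ≤ b`
    (Ω : Type) [MeasurableSpace Ω] (μ : Measure Ω) [IsProbabilityMeasure μ]
    (X : Ω → ℝ) (hXmeas : Measurable X)
    (hXsymm : μ.map X = μ.map (fun ω => -X ω))
    (hXint : Integrable (fun ω => |X ω| ^ t) μ)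
    (hX2 : ∫ ω, (X ω) ^ 2 ∂μ ≤ a ^ 2)
    (hXt : ∫ ω, |X ω| ^ t ∂μ ≤ b)
    -- a Rademacher random variable `U`
    (Ω' : Type) [MeasurableSpace Ω'] (μ' : Measure Ω') [IsProbabilityMeasure μ']
    (U : Ω' → ℝ) (hUmeas : Measurable U)
    (hU1 : μ' {ω | U ω = 1} = 1 / 2) (hU2 : μ' {ω | U ω = -1} = 1 / 2) :
    (∫ ω, |z₁ * X ω + z₂| ^ t ∂μ) - b * z₁ ^ t
      ≤ (∫ ω, |a * z₁ * U ω + z₂| ^ t ∂μ') - a ^ t * z₁ ^ t :=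
  moment_ineq_symm_rademacher_two_lt_t_lt_four_general t ht2 ht4 z₁ z₂ hz₁ a b ha Ω μ X hXmeas
    hXsymm hXint hX2 hXt Ω' μ' U hUmeas hU1 hU2
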